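/- arXiv:2402.16025 — 2 statements merged into one kernel-verified Lean document; each statement's English description precedes it below -/
import Mathlib

section
/- Theorem 1 (preservation of the second-order proximity, with explicit constants): Let d ≥ 1 and α > 0, suppose every component of the weight vector l satisfies l_i ≥ α, and suppose the direction vector r satisfies ‖r‖₂ = 1. If there is a vector x_w and a real ε₁ ≥ 0 such that p_score(u,w) ≤ ε₁ and p_score(v,w) ≤ ε₁, then the pairwise AS difference satisfies D(u,v) = p_score(u,v) + |h_score(u,v)| ≤ 4ε₁ + 2√(ε₁/α). -/
/-!
Since `(a - b)² ≤ 2 (c - b)² + 2 (c - a)²`, the weighted squared distance satisfies a quasi-triangle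
inequality through `x_w`, so `p_score(u,v) ≤ 4ε₁`. The weights are bounded below by `α`, hence
`‖x_v - x_u‖² ≤ p_score(u,v) / α ≤ 4ε₁ / α`, and by Cauchy–Schwarz with `‖r‖ = 1` the hierarchy
distance is at most `‖x_v - x_u‖ ≤ 2 √(ε₁ / α)`.
-/

open Finset

section WeightedSquares

variable {ι : Type*} [Fintype ι] (w : ι → ℝ)

theorem sum_mul_sq_sub_le (hw : ∀ i, 0 ≤ w i) (a b c : ι → ℝ) :
    ∑ i, w i * (a i - b i) ^ 2 ≤
      2 * (∑ i, w i * (c i - b i) ^ 2 + ∑ i, w i * (c i - a i) ^ 2) := by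
  rw [← sum_add_distrib, mul_sum]
  refine sum_le_sum fun i _ => ?_
  calc w i * (a i - b i) ^ 2 = w i * ((c i - b i) + (a i - c i)) ^ 2 := by ring
    _ ≤ w i * (2 * ((c i - b i) ^ 2 + (a i - c i) ^ 2)) :=
        mul_le_mul_of_nonneg_left add_sq_le (hw i)
    _ = 2 * (w i * (c i - b i) ^ 2 + w i * (c i - a i) ^ 2) := by ring

theorem mul_sum_sq_le_sum_mul_sq {α : ℝ} (hw : ∀ i, α ≤ w i) (x : ι → ℝ) :
    α * ∑ i, x i ^ 2 ≤ ∑ i, w i * x i ^ 2 := by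
  rw [mul_sum]
  exact sum_le_sum fun i _ => mul_le_mul_of_nonneg_right (hw i) (sq_nonneg _)

theorem EuclideanSpace.norm_le_sqrt_sum_mul_sq_div {α : ℝ} (hα : 0 < α) (hw : ∀ i, α ≤ w i)
    (x : EuclideanSpace ℝ ι) : ‖x‖ ≤ √((∑ i, w i * x i ^ 2) / α) := by
  refine Real.le_sqrt_of_sq_le ?_
  rw [le_div_iff₀ hα, EuclideanSpace.real_norm_sq_eq, mul_comm]
  exact mul_sum_sq_le_sum_mul_sq w hw x

end WeightedSquares

theorem EuclideanSpace.abs_sum_mul_le_norm_mul_norm {ι : Type*} [Fintype ι]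
    (x y : EuclideanSpace ℝ ι) : |∑ i, x i * y i| ≤ ‖x‖ * ‖y‖ := by
  simpa [PiLp.inner_apply, mul_comm] using abs_real_inner_le_norm x y

theorem second_order_proximity_preservation_general
    (d : ℕ)
    (xu xv xw : EuclideanSpace ℝ (Fin d))
    (l r : EuclideanSpace ℝ (Fin d))
    (α : ℝ) (hα : 0 < α) (hl : ∀ i, α ≤ l i) (hr : ‖r‖ = 1)
    (ε₁ : ℝ)
    (huw : ∑ i, l i * (xw i - xu i) ^ 2 ≤ ε₁)
    (hvw : ∑ i, l i * (xw i - xv i) ^ 2 ≤ ε₁) :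
    (∑ i, l i * (xv i - xu i) ^ 2) + |∑ i, (xv i - xu i) * r i| ≤
      4 * ε₁ + 2 * Real.sqrt (ε₁ / α) := by
  have hp : ∑ i, l i * (xv i - xu i) ^ 2 ≤ 4 * ε₁ := by
    linarith [sum_mul_sq_sub_le l (fun i => hα.le.trans (hl i)) xv xu xw]
  have hnorm : ‖xv - xu‖ ≤ √(4 * ε₁ / α) := by
    refine (EuclideanSpace.norm_le_sqrt_sum_mul_sq_div l hα hl (xv - xu)).trans ?_
    simpa using Real.sqrt_le_sqrt (div_le_div_of_nonneg_right hp hα.le)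
  have hh : |∑ i, (xv i - xu i) * r i| ≤ ‖xv - xu‖ := by
    simpa [hr] using EuclideanSpace.abs_sum_mul_le_norm_mul_norm (xv - xu) r
  calc _ ≤ 4 * ε₁ + √(4 * ε₁ / α) := add_le_add hp (hh.trans hnorm)
    _ = 4 * ε₁ + 2 * √(ε₁ / α) := by
        rw [mul_div_assoc, Real.sqrt_mul (by norm_num), show (4 : ℝ) = 2 ^ 2 by norm_num,
          Real.sqrt_sq (by norm_num)]

/-- Theorem 1 (preservation of the second-order proximity, with explicit constants). -/
theorem second_order_proximity_preservation
    (d : ℕ) (hd : 1 ≤ d)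
    (xu xv xw : EuclideanSpace ℝ (Fin d))
    (l r : EuclideanSpace ℝ (Fin d))
    (α : ℝ) (hα : 0 < α) (hl : ∀ i, α ≤ l i) (hr : ‖r‖ = 1)
    (ε₁ : ℝ) (hε₁ : 0 ≤ ε₁)
    (huw : ∑ i, l i * (xw i - xu i) ^ 2 ≤ ε₁)
    (hvw : ∑ i, l i * (xw i - xv i) ^ 2 ≤ ε₁) :
    (∑ i, l i * (xv i - xu i) ^ 2) + |∑ i, (xv i - xu i) * r i| ≤
      4 * ε₁ + 2 * Real.sqrt (ε₁ / α) :=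
  second_order_proximity_preservation_general d xu xv xw l r α hα hl hr ε₁ huw hvw
end

section
/- Eligible pairing sets are exactly warping paths: let m, n ≥ 1 and let P be a finite nonempty set of index pairs contained in {1,…,m} × {1,…,n} satisfying (i) coverage: every i ∈ {1,…,m} occurs as the first coordinate of some pair in P and every j ∈ {1,…,n} occurs as the second coordinate of some pair in P, and (ii) non-crossing monotonicity: for all (a,b), (a',b') ∈ P, if a < a' then b ≤ b', and if b < b' then a ≤ a'. Then (1,1) ∈ P and (m,n) ∈ P, and when the elements of P are listed in lexicographic order as (i₁,j₁),…,(i_K,j_K), every consecutive increment (i_{k+1} − i_k, j_{k+1} − j_k) lies in {(1,0),(0,1),(1,1)}; that is, the lexicographic enumeration of P is a warping path from (1,1) to (m,n). -/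
/-! Coverage of row 1 and column 1 forces `(1, 1) ∈ P`: if `(1, j) ∈ P` with `j > 1`, then the
pair `(i, 1)` covering column 1 has `i ≤ 1` by non-crossing; dually `(m, n) ∈ P`. If `q ≺ q'`
are lexicographically consecutive in `P`, the pair covering row `q.1 + 1` shows
`q'.1 ≤ q.1 + 1`, and the pair covering column `q.2 + 1` lies, by non-crossing,
lexicographically between `q` and `q'` unless `q'.2 ≤ q.2 + 1`. Together with monotonicity
only the three warping steps remain. -/

/-- A single admissible move in a warping path. -/
def DTWStep (q q' : ℕ × ℕ) : Prop :=
  (q'.1 = q.1 + 1 ∧ q'.2 = q.2) ∨ (q'.1 = q.1 ∧ q'.2 = q.2 + 1) ∨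
    (q'.1 = q.1 + 1 ∧ q'.2 = q.2 + 1)

/-- A warping path from `(1,1)` to `(i,j)` inside the grid `{1,…,m} × {1,…,n}`. -/
def IsWarpingPathTo (m n i j : ℕ) (p : List (ℕ × ℕ)) : Prop :=
  (∀ q ∈ p, 1 ≤ q.1 ∧ q.1 ≤ m ∧ 1 ≤ q.2 ∧ q.2 ≤ n) ∧
    p.head? = some (1, 1) ∧ p.getLast? = some (i, j) ∧ List.Chain' DTWStep p

namespace List

variable {α : Type*} {R : α → α → Prop} {l : List α}

theorem Pairwise.head?_eq_some (hl : l.Pairwise R) {a : α} (ha : a ∈ l)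
    (hmin : ∀ b ∈ l, ¬ R b a) : l.head? = some a := by
  cases l with
  | nil => simp at ha
  | cons b t =>
    rcases mem_cons.1 ha with rfl | ha
    · rfl
    · exact absurd (rel_of_pairwise_cons hl ha) (hmin b mem_cons_self)

theorem Pairwise.getLast?_eq_some (hl : l.Pairwise R) {a : α} (ha : a ∈ l)
    (hmax : ∀ b ∈ l, ¬ R a b) : l.getLast? = some a := by
  rw [← head?_reverse]
  exact (pairwise_reverse.2 hl).head?_eq_some (mem_reverse.2 ha)
    fun b hb => hmax b (mem_reverse.1 hb)

theorem Pairwise.isChain_of_no_mem_between [Std.Asymm R] {S : α → α → Prop}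
    (hl : l.Pairwise R)
    (h : ∀ a ∈ l, ∀ b ∈ l, R a b → (∀ c ∈ l, R a c → ¬ R c b) → S a b) : l.IsChain S := by
  induction l with
  | nil => exact .nil
  | cons a t ih =>
    cases t with
    | nil => exact .singleton a
    | cons b t =>
      have hab : R a b := rel_of_pairwise_cons hl mem_cons_self
      refine isChain_cons_cons.2 ⟨h a mem_cons_self b (mem_cons_of_mem a mem_cons_self) hab ?_, ?_⟩
      · intro c hc hac hcb
        rcases mem_cons.1 hc with rfl | hc
        · exact asymm hac hac
        rcases mem_cons.1 hc with rfl | hc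
        · exact asymm hcb hcb
        · exact asymm hcb (rel_of_pairwise_cons hl.of_cons hc)
      · refine ih hl.of_cons fun a' ha' b' hb' hab' hgap => h a' (mem_cons_of_mem a ha') b'
          (mem_cons_of_mem a hb') hab' fun c hc hac hcb => ?_
        rcases mem_cons.1 hc with rfl | hc
        · exact asymm hac (rel_of_pairwise_cons hl ha')
        · exact hgap c hc hac hcb

end List

local notation:50 q:51 " ≺ " q':51 => Prod.Lex (α := ℕ) (β := ℕ) (· < ·) (· < ·) q q'

structure IsEligiblePairing (m n : ℕ) (P : Finset (ℕ × ℕ)) : Prop where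
  mem_grid : ∀ q ∈ P, 1 ≤ q.1 ∧ q.1 ≤ m ∧ 1 ≤ q.2 ∧ q.2 ≤ n
  exists_mem_fst : ∀ i, 1 ≤ i → i ≤ m → ∃ j, (i, j) ∈ P
  exists_mem_snd : ∀ j, 1 ≤ j → j ≤ n → ∃ i, (i, j) ∈ P
  snd_le_of_fst_lt : ∀ q ∈ P, ∀ q' ∈ P, q.1 < q'.1 → q.2 ≤ q'.2
  fst_le_of_snd_lt : ∀ q ∈ P, ∀ q' ∈ P, q.2 < q'.2 → q.1 ≤ q'.1

namespace IsEligiblePairing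

variable {m n : ℕ} {P : Finset (ℕ × ℕ)}

theorem one_one_mem (hP : IsEligiblePairing m n P) (hm : 1 ≤ m) (hn : 1 ≤ n) : (1, 1) ∈ P := by
  obtain ⟨j, hj⟩ := hP.exists_mem_fst 1 le_rfl hm
  obtain ⟨i, hi⟩ := hP.exists_mem_snd 1 le_rfl hn
  rcases (hP.mem_grid _ hj).2.2.1.eq_or_lt with rfl | hj1
  · exact hj
  · obtain rfl : i = 1 := (hP.fst_le_of_snd_lt _ hi _ hj hj1).antisymm (hP.mem_grid _ hi).1
    exact hi

theorem top_mem (hP : IsEligiblePairing m n P) (hm : 1 ≤ m) (hn : 1 ≤ n) : (m, n) ∈ P := by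
  obtain ⟨j, hj⟩ := hP.exists_mem_fst m hm le_rfl
  obtain ⟨i, hi⟩ := hP.exists_mem_snd n hn le_rfl
  rcases (hP.mem_grid _ hj).2.2.2.eq_or_lt with rfl | hjn
  · exact hj
  · obtain rfl : i = m := (hP.mem_grid _ hi).2.1.antisymm (hP.fst_le_of_snd_lt _ hj _ hi hjn)
    exact hi

theorem not_lex_one_one (hP : IsEligiblePairing m n P) {q : ℕ × ℕ} (hq : q ∈ P) :
    ¬ q ≺ (1, 1) := by
  have := hP.mem_grid q hq
  rw [Prod.lex_def]
  omega

theorem not_top_lex (hP : IsEligiblePairing m n P) {q : ℕ × ℕ} (hq : q ∈ P) : ¬ (m, n) ≺ q := by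
  have := hP.mem_grid q hq
  rw [Prod.lex_def]
  omega

theorem exists_between_of_fst_add_one_lt (hP : IsEligiblePairing m n P) {q q' : ℕ × ℕ}
    (hq' : q' ∈ P) (h : q.1 + 1 < q'.1) : ∃ p ∈ P, q ≺ p ∧ p ≺ q' := by
  have := hP.mem_grid q' hq'
  obtain ⟨j, hj⟩ := hP.exists_mem_fst (q.1 + 1) le_add_self (by omega)
  exact ⟨_, hj, Prod.lex_def.2 (.inl (Nat.lt_succ_self _)), Prod.lex_def.2 (.inl h)⟩

theorem exists_between_of_snd_add_one_lt (hP : IsEligiblePairing m n P) {q q' : ℕ × ℕ}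
    (hq : q ∈ P) (hq' : q' ∈ P) (h : q.2 + 1 < q'.2) : ∃ p ∈ P, q ≺ p ∧ p ≺ q' := by
  have := hP.mem_grid q' hq'
  obtain ⟨i, hi⟩ := hP.exists_mem_snd (q.2 + 1) le_add_self (by omega)
  have hqi := hP.fst_le_of_snd_lt q hq _ hi (Nat.lt_succ_self _)
  have hiq' := hP.fst_le_of_snd_lt _ hi q' hq' h
  refine ⟨_, hi, Prod.lex_def.2 ?_, Prod.lex_def.2 ?_⟩ <;> omega

theorem dtwStep_of_no_mem_between (hP : IsEligiblePairing m n P) {q q' : ℕ × ℕ} (hq : q ∈ P)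
    (hq' : q' ∈ P) (hlt : q ≺ q') (hgap : ∀ p ∈ P, q ≺ p → ¬ p ≺ q') : DTWStep q q' := by
  have hfst : q'.1 ≤ q.1 + 1 := by
    by_contra! h
    obtain ⟨p, hp, hqp, hpq'⟩ := hP.exists_between_of_fst_add_one_lt hq' h
    exact hgap p hp hqp hpq'
  have hsnd : q'.2 ≤ q.2 + 1 := by
    by_contra! h
    obtain ⟨p, hp, hqp, hpq'⟩ := hP.exists_between_of_snd_add_one_lt hq hq' h
    exact hgap p hp hqp hpq'
  have hmono : q.1 < q'.1 → q.2 ≤ q'.2 := hP.snd_le_of_fst_lt q hq q' hq'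
  rw [Prod.lex_def] at hlt
  unfold DTWStep
  omega

end IsEligiblePairing

theorem eligible_pairing_is_warping_path_general
    (m n : ℕ) (hm : 1 ≤ m) (hn : 1 ≤ n)
    (P : Finset (ℕ × ℕ))
    (hrange : ∀ q ∈ P, 1 ≤ q.1 ∧ q.1 ≤ m ∧ 1 ≤ q.2 ∧ q.2 ≤ n)
    (hcov₁ : ∀ i, 1 ≤ i → i ≤ m → ∃ j, (i, j) ∈ P)
    (hcov₂ : ∀ j, 1 ≤ j → j ≤ n → ∃ i, (i, j) ∈ P)
    (hmono₁ : ∀ q ∈ P, ∀ q' ∈ P, q.1 < q'.1 → q.2 ≤ q'.2)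
    (hmono₂ : ∀ q ∈ P, ∀ q' ∈ P, q.2 < q'.2 → q.1 ≤ q'.1)
    (L : List (ℕ × ℕ))
    (hLmem : ∀ q, q ∈ L ↔ q ∈ P)
    (hLsorted : L.Pairwise (Prod.Lex (· < ·) (· < ·))) :
    (1, 1) ∈ P ∧ (m, n) ∈ P ∧ IsWarpingPathTo m n m n L := by
  have hP : IsEligiblePairing m n P := ⟨hrange, hcov₁, hcov₂, hmono₁, hmono₂⟩
  have h11 := hP.one_one_mem hm hn
  have hmn := hP.top_mem hm hn
  refine ⟨h11, hmn, fun q hq => hrange q ((hLmem q).1 hq), ?_, ?_, ?_⟩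
  · exact hLsorted.head?_eq_some ((hLmem _).2 h11) fun q hq =>
      hP.not_lex_one_one ((hLmem q).1 hq)
  · exact hLsorted.getLast?_eq_some ((hLmem _).2 hmn) fun q hq =>
      hP.not_top_lex ((hLmem q).1 hq)
  · exact hLsorted.isChain_of_no_mem_between fun q hq q' hq' hlt hgap =>
      hP.dtwStep_of_no_mem_between ((hLmem q).1 hq) ((hLmem q').1 hq') hlt
        fun p hp => hgap p ((hLmem p).2 hp)

/-- Eligible pairing sets are exactly warping paths: the lexicographic enumeration
of an eligible pairing set is a warping path from `(1,1)` to `(m,n)`. -/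
theorem eligible_pairing_is_warping_path
    (m n : ℕ) (hm : 1 ≤ m) (hn : 1 ≤ n)
    (P : Finset (ℕ × ℕ)) (hne : P.Nonempty)
    (hrange : ∀ q ∈ P, 1 ≤ q.1 ∧ q.1 ≤ m ∧ 1 ≤ q.2 ∧ q.2 ≤ n)
    (hcov₁ : ∀ i, 1 ≤ i → i ≤ m → ∃ j, (i, j) ∈ P)
    (hcov₂ : ∀ j, 1 ≤ j → j ≤ n → ∃ i, (i, j) ∈ P)
    (hmono₁ : ∀ q ∈ P, ∀ q' ∈ P, q.1 < q'.1 → q.2 ≤ q'.2)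
    (hmono₂ : ∀ q ∈ P, ∀ q' ∈ P, q.2 < q'.2 → q.1 ≤ q'.1)
    (L : List (ℕ × ℕ))
    (hLmem : ∀ q, q ∈ L ↔ q ∈ P)
    (hLsorted : L.Pairwise (Prod.Lex (· < ·) (· < ·))) :
    (1, 1) ∈ P ∧ (m, n) ∈ P ∧ IsWarpingPathTo m n m n L :=
  eligible_pairing_is_warping_path_general m n hm hn P hrange hcov₁ hcov₂ hmono₁ hmono₂ L hLmem
    hLsorted
end
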